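/- Let L > 0, a > 0 and u₀ > 0, and let u : ℝ → ℝ be three times continuously differentiable on [0,L] with u(0) = u(L) = 0 and u′(L) = 0. Then ∫₀^L u′(x)² dx ≤ 4 ∫₀^L (u″′(x) + u′(x) + a·sat(u(x)))² dx + (4a² + 8L²/5) ∫₀^L u(x)² dx. In particular, the H¹₀-norm of u is bounded by a constant (depending only on L and a) times the graph norm ‖u‖²_{L²} + ‖u″′ + u′ + a·sat(u)‖²_{L²}, which yields compactness of the embedding of the operator domain into L²(0,L). -/

import Mathlib

/-- The saturation function with level `u₀`. -/
noncomputable def sat (u₀ s : ℝ) : ℝ :=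
  if s < -u₀ then -u₀ else if s ≤ u₀ then s else u₀

/-!
Write `f = u‴ + u′ + a·sat(u)`, multiply by `x·u` and integrate over `[0, L]`. Integrating by parts
with `u(0) = u(L) = u′(L) = 0` gives `∫ x u u‴ = 3/2 ∫ u′²` and `∫ x u u′ = -1/2 ∫ u²`, while
`x u sat(u) ≥ 0`; hence `3/2 ‖u′‖² - 1/2 ‖u‖² ≤ ∫ x u f ≤ ε ‖f‖² + L²/(4ε) ‖u‖²` for every `ε > 0`.
The identity for `∫ x u u′` also yields the Hardy-type bound `‖u‖² ≤ 4L² ‖u′‖²`, and choosing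
`ε = 4` when `L² ≤ 1/4` and `ε = 6` otherwise gives `‖u′‖² ≤ 4 ‖f‖² + 8L²/5 ‖u‖²`.
-/

open Set intervalIntegral

lemma sat_eq_max_min {u₀ : ℝ} (hu₀ : 0 ≤ u₀) (s : ℝ) : sat u₀ s = max (-u₀) (min s u₀) := by
  unfold sat
  split_ifs with h₁ h₂
  · rw [min_eq_left (by linarith), max_eq_left (by linarith)]
  · rw [min_eq_left h₂, max_eq_right (by linarith)]
  · rw [min_eq_right (by linarith), max_eq_right (by linarith)]

lemma continuous_sat {u₀ : ℝ} (hu₀ : 0 ≤ u₀) : Continuous (sat u₀) := by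
  simp_rw [funext (sat_eq_max_min hu₀)]
  fun_prop

lemma mul_sat_nonneg {u₀ : ℝ} (hu₀ : 0 ≤ u₀) (s : ℝ) : 0 ≤ s * sat u₀ s := by
  unfold sat
  split_ifs <;> nlinarith

theorem intervalIntegral.integral_eq_sub_of_hasDerivWithinAt_Icc {a b : ℝ} (hab : a ≤ b)
    {f f' : ℝ → ℝ} (hderiv : ∀ x ∈ Icc a b, HasDerivWithinAt f (f' x) (Icc a b) x)
    (hf' : ContinuousOn f' (Icc a b)) :
    ∫ x in a..b, f' x = f b - f a :=
  integral_eq_sub_of_hasDerivAt_of_le hab (HasDerivWithinAt.continuousOn hderiv)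
    (fun x hx => (hderiv x (Ioo_subset_Icc_self hx)).hasDerivAt (Icc_mem_nhds hx.1 hx.2))
    (hf'.intervalIntegrable_of_Icc hab)

section WeightedIdentities

variable {L : ℝ} {u u₁ u₂ u₃ : ℝ → ℝ}

lemma integral_mul_mul_deriv_eq (hL : 0 ≤ L)
    (hu₁ : ∀ x ∈ Icc 0 L, HasDerivWithinAt u (u₁ x) (Icc 0 L) x)
    (hu₁c : ContinuousOn u₁ (Icc 0 L)) (huL : u L = 0) :
    ∫ x in 0..L, x * u x * u₁ x = -(∫ x in 0..L, u x ^ 2) / 2 := by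
  have huc := HasDerivWithinAt.continuousOn hu₁
  have hftc : ∫ x in 0..L, (x * u x * u₁ x + u x ^ 2 / 2) = 0 := by
    rw [integral_eq_sub_of_hasDerivWithinAt_Icc hL (f := fun x => x * u x ^ 2 / 2)
      (fun x hx => by
        refine (((hasDerivWithinAt_id x _).mul ((hu₁ x hx).pow 2)).div_const 2).congr_deriv ?_
        simp only [id, Pi.pow_apply]; ring)
      (by fun_prop)]
    simp [huL]
  have h₁ : IntervalIntegrable (fun x => x * u x * u₁ x) MeasureTheory.volume 0 L :=
    ContinuousOn.intervalIntegrable_of_Icc hL (by fun_prop)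
  have h₂ : IntervalIntegrable (fun x => u x ^ 2 / 2) MeasureTheory.volume 0 L :=
    ContinuousOn.intervalIntegrable_of_Icc hL (by fun_prop)
  rw [integral_add h₁ h₂, integral_div] at hftc
  linarith

lemma integral_mul_mul_third_deriv_eq (hL : 0 ≤ L)
    (hu₁ : ∀ x ∈ Icc 0 L, HasDerivWithinAt u (u₁ x) (Icc 0 L) x)
    (hu₂ : ∀ x ∈ Icc 0 L, HasDerivWithinAt u₁ (u₂ x) (Icc 0 L) x)
    (hu₃ : ∀ x ∈ Icc 0 L, HasDerivWithinAt u₂ (u₃ x) (Icc 0 L) x)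
    (hu₃c : ContinuousOn u₃ (Icc 0 L)) (hu0 : u 0 = 0) (huL : u L = 0) (hu₁L : u₁ L = 0) :
    ∫ x in 0..L, x * u x * u₃ x = 3 / 2 * ∫ x in 0..L, u₁ x ^ 2 := by
  have huc := HasDerivWithinAt.continuousOn hu₁
  have hu₁c := HasDerivWithinAt.continuousOn hu₂
  have hftc : ∫ x in 0..L, (x * u x * u₃ x - 3 / 2 * u₁ x ^ 2) = 0 := by
    rw [integral_eq_sub_of_hasDerivWithinAt_Icc hL
      (f := fun x => x * u x * u₂ x - u x * u₁ x - x * u₁ x ^ 2 / 2)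
      (fun x hx => by
        have hx' := hasDerivWithinAt_id x (Icc 0 L)
        refine ((((hx'.mul (hu₁ x hx)).mul (hu₃ x hx)).sub ((hu₁ x hx).mul (hu₂ x hx))).sub
          ((hx'.mul ((hu₂ x hx).pow 2)).div_const 2)).congr_deriv ?_
        simp only [id, Pi.pow_apply, Pi.mul_apply]; ring)
      (by fun_prop)]
    simp [huL, hu₁L, hu0]
  have h₁ : IntervalIntegrable (fun x => x * u x * u₃ x) MeasureTheory.volume 0 L :=
    ContinuousOn.intervalIntegrable_of_Icc hL (by fun_prop)
  have h₂ : IntervalIntegrable (fun x => 3 / 2 * u₁ x ^ 2) MeasureTheory.volume 0 L :=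
    ContinuousOn.intervalIntegrable_of_Icc hL (by fun_prop)
  rw [integral_sub h₁ h₂, integral_const_mul] at hftc
  linarith


lemma integral_mul_mul_le (hL : 0 ≤ L) {g h : ℝ → ℝ} (hg : ContinuousOn g (Icc 0 L))
    (hh : ContinuousOn h (Icc 0 L)) {ε : ℝ} (hε : 0 < ε) :
    ∫ x in 0..L, x * g x * h x
      ≤ ε * (∫ x in 0..L, h x ^ 2) + L ^ 2 / (4 * ε) * ∫ x in 0..L, g x ^ 2 := by
  have hh₂ : IntervalIntegrable (fun x => ε * h x ^ 2) MeasureTheory.volume 0 L :=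
    ContinuousOn.intervalIntegrable_of_Icc hL (by fun_prop)
  have hg₂ : IntervalIntegrable (fun x => L ^ 2 / (4 * ε) * g x ^ 2) MeasureTheory.volume 0 L :=
    ContinuousOn.intervalIntegrable_of_Icc hL (by fun_prop)
  rw [← integral_const_mul, ← integral_const_mul, ← integral_add hh₂ hg₂]
  refine integral_mono_on hL (ContinuousOn.intervalIntegrable_of_Icc hL (by fun_prop))
    (hh₂.add hg₂) fun x ⟨hx₀, hxL⟩ => ?_
  have hx : x ^ 2 ≤ L ^ 2 := pow_le_pow_left₀ hx₀ hxL 2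
  -- `4εxgh ≤ 4ε²h² + x²g²` is `(2εh - xg)² ≥ 0`
  rw [div_mul_eq_mul_div, ← sub_nonneg, ← mul_nonneg_iff_of_pos_left (by positivity : 0 < 4 * ε)]
  field_simp
  nlinarith [sq_nonneg (2 * ε * h x - x * g x), mul_nonneg (sub_nonneg.2 hx) (sq_nonneg (g x))]

lemma integral_sq_le_four_mul_sq_mul_integral_deriv_sq (hL : 0 ≤ L)
    (hu₁ : ∀ x ∈ Icc 0 L, HasDerivWithinAt u (u₁ x) (Icc 0 L) x)
    (hu₁c : ContinuousOn u₁ (Icc 0 L)) (huL : u L = 0) :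
    ∫ x in 0..L, u x ^ 2 ≤ 4 * L ^ 2 * ∫ x in 0..L, u₁ x ^ 2 := by
  have huc := HasDerivWithinAt.continuousOn hu₁
  have h := integral_mul_mul_le hL hu₁c huc.neg (by norm_num : (0 : ℝ) < 1 / 4)
  simp only [mul_neg, integral_neg, Pi.neg_apply, neg_sq] at h
  have := integral_mul_mul_deriv_eq hL hu₁ hu₁c huL
  simp only [mul_right_comm _ (u₁ _)] at h
  norm_num at h
  linarith

lemma le_integral_mul_mul_kdv_sat {a u₀ : ℝ} (hL : 0 ≤ L) (ha : 0 ≤ a) (hu₀ : 0 ≤ u₀)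
    (hu₁ : ∀ x ∈ Icc 0 L, HasDerivWithinAt u (u₁ x) (Icc 0 L) x)
    (hu₂ : ∀ x ∈ Icc 0 L, HasDerivWithinAt u₁ (u₂ x) (Icc 0 L) x)
    (hu₃ : ∀ x ∈ Icc 0 L, HasDerivWithinAt u₂ (u₃ x) (Icc 0 L) x)
    (hu₃c : ContinuousOn u₃ (Icc 0 L)) (hu0 : u 0 = 0) (huL : u L = 0) (hu₁L : u₁ L = 0) :
    3 / 2 * (∫ x in 0..L, u₁ x ^ 2) - (∫ x in 0..L, u x ^ 2) / 2
      ≤ ∫ x in 0..L, x * u x * (u₃ x + u₁ x + a * sat u₀ (u x)) := by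
  have huc := HasDerivWithinAt.continuousOn hu₁
  have hu₁c := HasDerivWithinAt.continuousOn hu₂
  have hsatc : ContinuousOn (fun x => sat u₀ (u x)) (Icc 0 L) :=
    (continuous_sat hu₀).comp_continuousOn huc
  have hsat : 0 ≤ ∫ x in 0..L, x * u x * sat u₀ (u x) :=
    integral_nonneg hL fun x hx => by
      simpa only [mul_assoc] using mul_nonneg hx.1 (mul_sat_nonneg hu₀ (u x))
  have hsplit : ∫ x in 0..L, x * u x * (u₃ x + u₁ x + a * sat u₀ (u x))
      = (∫ x in 0..L, x * u x * u₃ x) + (∫ x in 0..L, x * u x * u₁ x)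
        + a * ∫ x in 0..L, x * u x * sat u₀ (u x) := by
    simp only [mul_add, mul_left_comm _ a]
    rw [integral_add, integral_add, integral_const_mul] <;>
      exact ContinuousOn.intervalIntegrable_of_Icc hL (by fun_prop)
  rw [hsplit, integral_mul_mul_third_deriv_eq hL hu₁ hu₂ hu₃ hu₃c hu0 huL hu₁L,
    integral_mul_mul_deriv_eq hL hu₁ hu₁c huL]
  linarith [mul_nonneg ha hsat]

end WeightedIdentities

lemma le_of_multiplier_estimates {A B E F L : ℝ} (hA : 0 ≤ A) (hB : 0 ≤ B)
    (hmult : 3 / 2 * A - B / 2 ≤ E) (hE : ∀ ε > 0, E ≤ ε * F + L ^ 2 / (4 * ε) * B)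
    (hP : B ≤ 4 * L ^ 2 * A) :
    A ≤ 4 * F + 8 * L ^ 2 / 5 * B := by
  rcases le_or_gt (L ^ 2) (1 / 4) with hsmall | hlarge
  · have := hE 4 (by norm_num)
    nlinarith [mul_nonneg (sub_nonneg.2 hsmall) hA, mul_nonneg (sq_nonneg L) hB]
  · have := hE 6 (by norm_num)
    nlinarith [mul_nonneg (sub_nonneg.2 hlarge.le) hB]

/-- Graph-norm bound on the `H¹₀`-seminorm for the saturated Korteweg–de Vries
operator: if `u` is three times continuously differentiable on `[0,L]` with
`u(0) = u(L) = u′(L) = 0`, then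
`∫₀^L (u′)² ≤ 4 ∫₀^L (u″′ + u′ + a·sat(u))² + (4a² + 8L²/5) ∫₀^L u²`. -/
theorem kdv_sat_graph_norm_H1_bound (L a u₀ : ℝ)
    (hL : 0 < L) (ha : 0 < a) (hu₀ : 0 < u₀) (u u₁ u₂ u₃ : ℝ → ℝ)
    (hu₁ : ∀ x ∈ Set.Icc (0:ℝ) L, HasDerivWithinAt u (u₁ x) (Set.Icc 0 L) x)
    (hu₂ : ∀ x ∈ Set.Icc (0:ℝ) L, HasDerivWithinAt u₁ (u₂ x) (Set.Icc 0 L) x)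
    (hu₃ : ∀ x ∈ Set.Icc (0:ℝ) L, HasDerivWithinAt u₂ (u₃ x) (Set.Icc 0 L) x)
    (hu₃cont : ContinuousOn u₃ (Set.Icc 0 L))
    (hbc0 : u 0 = 0) (hbcL : u L = 0) (hbc1 : u₁ L = 0) :
    ∫ x in (0:ℝ)..L, (u₁ x)^2
      ≤ 4 * (∫ x in (0:ℝ)..L, (u₃ x + u₁ x + a * sat u₀ (u x))^2)
        + (4 * a^2 + 8 * L^2 / 5) * ∫ x in (0:ℝ)..L, (u x)^2 := by
  have huc := HasDerivWithinAt.continuousOn hu₁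
  have hu₁c := HasDerivWithinAt.continuousOn hu₂
  have hsatc : ContinuousOn (fun x => sat u₀ (u x)) (Icc 0 L) :=
    (continuous_sat hu₀.le).comp_continuousOn huc
  have hB : 0 ≤ ∫ x in 0..L, u x ^ 2 := integral_nonneg hL.le fun x _ => sq_nonneg (u x)
  have hbound := le_of_multiplier_estimates
    (integral_nonneg hL.le fun x _ => sq_nonneg (u₁ x)) hB
    (le_integral_mul_mul_kdv_sat hL.le ha.le hu₀.le hu₁ hu₂ hu₃ hu₃cont hbc0 hbcL hbc1)
    (fun ε hε => integral_mul_mul_le hL.le huc (by fun_prop) hε)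
    (integral_sq_le_four_mul_sq_mul_integral_deriv_sq hL.le hu₁ hu₁c hbcL)
  linarith [mul_nonneg (sq_nonneg a) hB]
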